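/- Let M be a global NPC space with geodesic interpolation #_t, q ≥ 2, and let β be a p-contractive barycentric map. For a = (a_1,…,a_n) ∈ M^n, let x be the unique solution of x = β(x #_t μ_a) where μ_a = (1/n) Σ_i δ_{a_i} and t ∈ (0,1). Then for every z ∈ M: d^{2p}(z,x) ≤ (1/n) Σ_i d^{2p}(z,a_i) − (k_{2p}(1−t)/(2n)) Σ_i d^{2p}(x,a_i), where k_q is the uniform convexity constant of M. -/

import Mathlib

open MeasureTheory ENNReal Filter Topology

noncomputable section

variable {Ω M : Type*}

/-- A coupling of two measures on `M`. -/
def IsCoupling [MeasurableSpace M] (π : MeasureTheory.Measure (M × M))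
    (μ ν : MeasureTheory.Measure M) : Prop :=
  π.map Prod.fst = μ ∧ π.map Prod.snd = ν

/-- The `p`-Wasserstein (extended) distance between two measures. -/
def wassDist [MeasurableSpace M] [PseudoEMetricSpace M] (p : ℝ)
    (μ ν : MeasureTheory.Measure M) : ℝ≥0∞ :=
  ⨅ (π : MeasureTheory.Measure (M × M)) (_ : IsCoupling π μ ν),
    (∫⁻ xy, edist xy.1 xy.2 ^ p ∂π) ^ (1 / p)

/-- Finite `p`-th moment. -/
def HasFinitePMoment [MeasurableSpace M] [PseudoEMetricSpace M] (p : ℝ)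
    (μ : MeasureTheory.Measure M) : Prop :=
  ∀ x : M, ∫⁻ y, edist x y ^ p ∂μ < ⊤

/-- `p`-th Bochner integrability of an `M`-valued function. -/
def PIntegrable {mΩ : MeasurableSpace Ω} [PseudoEMetricSpace M] (p : ℝ)
    (P : MeasureTheory.Measure Ω) (φ : Ω → M) : Prop :=
  MeasureTheory.AEStronglyMeasurable φ P ∧ ∀ x : M, ∫⁻ ω, edist x (φ ω) ^ p ∂P < ⊤

/-- A `p`-contractive barycentric map. -/
structure IsBarycentric [MeasurableSpace M] [PseudoEMetricSpace M] (p : ℝ)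
    (β : MeasureTheory.Measure M → M) : Prop where
  map_dirac : ∀ x : M, β (MeasureTheory.Measure.dirac x) = x
  contract : ∀ μ ν : MeasureTheory.Measure M, MeasureTheory.IsProbabilityMeasure μ →
    MeasureTheory.IsProbabilityMeasure ν → HasFinitePMoment p μ → HasFinitePMoment p ν →
    edist (β μ) (β ν) ≤ wassDist p μ ν

/-- Empirical measure `(1/n) ∑_{k<n} δ_{φ(T^k ω)}`. -/
def empMeas [MeasurableSpace M] (φ : Ω → M) (T : Ω → Ω) (n : ℕ) (ω : Ω) :
    MeasureTheory.Measure M :=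
  (n : ℝ≥0∞)⁻¹ • ∑ k ∈ Finset.range n, MeasureTheory.Measure.dirac (φ (T^[k] ω))

/-- Uniform measure on a finite tuple. -/
def unifMeas [MeasurableSpace M] {n : ℕ} (x : Fin n → M) : MeasureTheory.Measure M :=
  (n : ℝ≥0∞)⁻¹ • ∑ i, MeasureTheory.Measure.dirac (x i)

/-!
Compare `δ_z` with `ν`, the push-forward of `μ_a` under `y ↦ x #_t y`, which is the uniform
measure on the points `x #_t a_i`. Since `β δ_z = z` and `β ν = x`, contractivity bounds
`d^p(z, x)` by the `p`-th moment of `ν` about `z`, computed along the coupling `δ_z ⊗ ν`;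
squaring and Cauchy–Schwarz give `d^{2p}(z, x) ≤ (1/n) ∑ d^{2p}(z, x #_t a_i)`. Uniform convexity
bounds each term by `(1 - t) d^{2p}(z, x) + t d^{2p}(z, a_i) - (k/2) t (1 - t) d^{2p}(x, a_i)`,
and the `(1 - t) d^{2p}(z, x)` absorbed on the left leaves the claim after division by `t`.
-/

section UniformMeasure

variable [MeasurableSpace M] {n : ℕ}

lemma unifMeas_map [MeasurableSingletonClass M] {N : Type*} [MeasurableSpace N]
    (a : Fin n → M) (f : M → N) :
    (unifMeas a).map f = unifMeas (f ∘ a) := by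
  have hf : AEMeasurable f (unifMeas a) := by
    refine AEMeasurable.smul_measure ?_ _
    rw [← Measure.sum_fintype]
    exact AEMeasurable.sum_measure fun i =>
      ⟨fun _ => f (a i), measurable_const, by simp [Filter.EventuallyEq, ae_dirac_eq]⟩
  ext s hs
  rw [Measure.map_apply_of_aemeasurable hf hs]
  simp only [unifMeas, Measure.smul_apply, Measure.coe_finsetSum, Finset.sum_apply,
    Measure.dirac_apply, Measure.dirac_apply' _ hs, smul_eq_mul]
  rfl

lemma lintegral_unifMeas [MeasurableSingletonClass M] (a : Fin n → M) (g : M → ℝ≥0∞) :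
    ∫⁻ y, g y ∂(unifMeas a) = (n : ℝ≥0∞)⁻¹ * ∑ i, g (a i) := by
  rw [unifMeas, lintegral_smul_measure, lintegral_finsetSum_measure]
  simp [lintegral_dirac]

lemma isProbabilityMeasure_unifMeas (hn : 0 < n) (a : Fin n → M) :
    IsProbabilityMeasure (unifMeas a) := by
  constructor
  simp [unifMeas, ENNReal.inv_mul_cancel (Nat.cast_ne_zero.mpr hn.ne')]

end UniformMeasure

section Moments

variable [MeasurableSpace M] {p : ℝ}

lemma hasFinitePMoment_unifMeas [PseudoMetricSpace M] [MeasurableSingletonClass M] (hp : 0 ≤ p)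
    {n : ℕ} (hn : 0 < n) (a : Fin n → M) : HasFinitePMoment p (unifMeas a) := fun w => by
  rw [lintegral_unifMeas]
  exact ENNReal.mul_lt_top (ENNReal.inv_lt_top.mpr (by exact_mod_cast hn))
    (ENNReal.sum_lt_top.mpr fun i _ => ENNReal.rpow_lt_top_of_nonneg hp (edist_ne_top _ _))

lemma hasFinitePMoment_dirac [PseudoMetricSpace M] [MeasurableSingletonClass M] (hp : 0 ≤ p)
    (z : M) :
    HasFinitePMoment p (Measure.dirac z) := fun w => by
  rw [lintegral_dirac]
  exact ENNReal.rpow_lt_top_of_nonneg hp (edist_ne_top _ _)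

lemma wassDist_dirac_le [PseudoEMetricSpace M] (hp : 0 ≤ p) (z : M) (ν : Measure M)
    [IsProbabilityMeasure ν] :
    wassDist p (Measure.dirac z) ν ≤ (∫⁻ y, edist z y ^ p ∂ν) ^ (1 / p) := by
  have hg : Measurable fun y : M => (z, y) := measurable_const.prodMk measurable_id
  have hcoupling : IsCoupling (ν.map fun y => (z, y)) (Measure.dirac z) ν := by
    constructor
    · rw [Measure.map_map measurable_fst hg]
      simp [Function.comp_def, Measure.map_const]
    · rw [Measure.map_map measurable_snd hg]
      exact Measure.map_id
  refine iInf₂_le_of_le _ hcoupling ?_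
  exact ENNReal.rpow_le_rpow (lintegral_map_le _ _) (one_div_nonneg.mpr hp)

end Moments

section Barycentric

variable [PseudoMetricSpace M] [MeasurableSpace M] [MeasurableSingletonClass M] {p : ℝ}
  {β : Measure M → M} {n : ℕ}

lemma IsBarycentric.edist_rpow_le (hp : 0 < p) (hβ : IsBarycentric p β) (hn : 0 < n)
    (b : Fin n → M) (z : M) :
    edist z (β (unifMeas b)) ^ p ≤ (n : ℝ≥0∞)⁻¹ * ∑ i, edist z (b i) ^ p := by
  have := isProbabilityMeasure_unifMeas hn b
  have hcontract : edist z (β (unifMeas b)) ≤ (∫⁻ y, edist z y ^ p ∂unifMeas b) ^ (1 / p) := by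
    simpa only [hβ.map_dirac] using
      (hβ.contract _ _ inferInstance inferInstance (hasFinitePMoment_dirac hp.le z)
        (hasFinitePMoment_unifMeas hp.le hn b)).trans (wassDist_dirac_le hp.le z _)
  rw [← lintegral_unifMeas b fun y => edist z y ^ p, ← ENNReal.rpow_le_rpow_iff (inv_pos.mpr hp),
    ← ENNReal.rpow_mul, mul_inv_cancel₀ hp.ne', ENNReal.rpow_one, ← one_div]
  exact hcontract

lemma IsBarycentric.dist_rpow_le (hp : 0 < p) (hβ : IsBarycentric p β) (hn : 0 < n)
    (b : Fin n → M) (z : M) :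
    dist z (β (unifMeas b)) ^ p ≤ (1 / (n : ℝ)) * ∑ i, dist z (b i) ^ p := by
  have h := hβ.edist_rpow_le hp hn b z
  simp only [edist_dist, ENNReal.ofReal_rpow_of_nonneg dist_nonneg hp.le] at h
  rwa [← ENNReal.ofReal_sum_of_nonneg (fun i _ => by positivity), ← ENNReal.ofReal_natCast,
    ← ENNReal.ofReal_inv_of_pos (by exact_mod_cast hn), ← ENNReal.ofReal_mul (by positivity),
    ENNReal.ofReal_le_ofReal_iff (by positivity), ← one_div] at h

lemma IsBarycentric.dist_rpow_two_mul_le (hp : 0 < p) (hβ : IsBarycentric p β) (hn : 0 < n)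
    (b : Fin n → M) (z : M) :
    dist z (β (unifMeas b)) ^ (2 * p) ≤ (1 / (n : ℝ)) * ∑ i, dist z (b i) ^ (2 * p) := by
  have hsq : ∀ y : M, dist z y ^ (2 * p) = (dist z y ^ p) ^ 2 := fun y => by
    rw [mul_comm, Real.rpow_mul dist_nonneg, Real.rpow_two]
  calc dist z (β (unifMeas b)) ^ (2 * p) = (dist z (β (unifMeas b)) ^ p) ^ 2 := hsq _
    _ ≤ ((∑ i, dist z (b i) ^ p) / n) ^ 2 := by
      gcongr
      simpa only [one_div_mul_eq_div] using hβ.dist_rpow_le hp hn b z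
    _ ≤ (∑ i, (dist z (b i) ^ p) ^ 2) / n := by
      simpa using sum_div_card_sq_le_sum_sq_div_card (s := Finset.univ) (f := (dist z <| b ·) ^ p)
    _ = (1 / (n : ℝ)) * ∑ i, dist z (b i) ^ (2 * p) := by simp only [hsq, one_div_mul_eq_div]

end Barycentric

theorem stmt19_general [MetricSpace M] [MeasurableSpace M] [BorelSpace M]
    (p : ℝ) (hp : 1 ≤ p)
    -- `interp x y t` is the point `x #_t y` on the geodesic from `x` to `y`
    (interp : M → M → ℝ → M)
    -- `k` is the uniform convexity constant `k_{2p}` of the global NPC space `M`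
    (k : ℝ)
    (hconv : ∀ z x y : M, ∀ t ∈ Set.Icc (0 : ℝ) 1,
      dist z (interp x y t) ^ (2 * p)
        ≤ (1 - t) * dist z x ^ (2 * p) + t * dist z y ^ (2 * p)
          - (k / 2) * t * (1 - t) * dist x y ^ (2 * p))
    (β : MeasureTheory.Measure M → M) (hβ : IsBarycentric p β)
    (n : ℕ) (hn : 0 < n) (a : Fin n → M)
    (t : ℝ) (ht : t ∈ Set.Ioo (0 : ℝ) 1)
    (x : M) (hx : x = β ((unifMeas a).map fun y => interp x y t)) :
    ∀ z : M,
      dist z x ^ (2 * p)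
        ≤ (1 / (n : ℝ)) * ∑ i, dist z (a i) ^ (2 * p)
          - (k * (1 - t) / (2 * (n : ℝ))) * ∑ i, dist x (a i) ^ (2 * p) := by
  intro z
  have hmean : dist z x ^ (2 * p)
      ≤ (1 / (n : ℝ)) * ∑ i, dist z (interp x (a i) t) ^ (2 * p) := by
    conv_lhs => rw [hx, unifMeas_map]
    exact hβ.dist_rpow_two_mul_le (by linarith) hn _ z
  have hsum : ∑ i, dist z (interp x (a i) t) ^ (2 * p)
      ≤ ∑ i, ((1 - t) * dist z x ^ (2 * p) + t * dist z (a i) ^ (2 * p)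
          - (k / 2) * t * (1 - t) * dist x (a i) ^ (2 * p)) :=
    Finset.sum_le_sum fun i _ => hconv z x (a i) t ⟨ht.1.le, ht.2.le⟩
  simp only [Finset.sum_sub_distrib, Finset.sum_add_distrib, Finset.sum_const, Finset.card_univ,
    Fintype.card_fin, nsmul_eq_mul, ← Finset.mul_sum] at hsum
  have hn' : (0 : ℝ) < n := by exact_mod_cast hn
  have habsorbed : t * dist z x ^ (2 * p) ≤ t * ((1 / (n : ℝ)) * ∑ i, dist z (a i) ^ (2 * p)
      - (k * (1 - t) / (2 * (n : ℝ))) * ∑ i, dist x (a i) ^ (2 * p)) := by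
    have := hmean.trans (mul_le_mul_of_nonneg_left hsum (by positivity))
    field_simp at this ⊢
    linarith
  exact le_of_mul_le_mul_left habsorbed ht.1

theorem stmt19 [MetricSpace M] [CompleteSpace M] [MeasurableSpace M] [BorelSpace M]
    (p : ℝ) (hp : 1 ≤ p)
    -- `interp x y t` is the point `x #_t y` on the geodesic from `x` to `y`
    (interp : M → M → ℝ → M)
    -- `k` is the uniform convexity constant `k_{2p}` of the global NPC space `M`
    (k : ℝ) (hk : 0 < k)
    (hconv : ∀ z x y : M, ∀ t ∈ Set.Icc (0 : ℝ) 1,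
      dist z (interp x y t) ^ (2 * p)
        ≤ (1 - t) * dist z x ^ (2 * p) + t * dist z y ^ (2 * p)
          - (k / 2) * t * (1 - t) * dist x y ^ (2 * p))
    (β : MeasureTheory.Measure M → M) (hβ : IsBarycentric p β)
    (n : ℕ) (hn : 0 < n) (a : Fin n → M)
    (t : ℝ) (ht : t ∈ Set.Ioo (0 : ℝ) 1)
    (x : M) (hx : x = β ((unifMeas a).map fun y => interp x y t)) :
    ∀ z : M,
      dist z x ^ (2 * p)
        ≤ (1 / (n : ℝ)) * ∑ i, dist z (a i) ^ (2 * p)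
          - (k * (1 - t) / (2 * (n : ℝ))) * ∑ i, dist x (a i) ^ (2 * p) :=
  stmt19_general p hp interp k hconv β hβ n hn a t ht x hx
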